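/- The 6-tuples (λ, g, ν, Δ, d, a) ∈ ℤ⁶ such that (λ, g, Δ, d, a) ∈ Γ₁₇₄, ν ≥ 0, the Le Barz bound holds, and the four inequalities −λ + 2g − ν − 3 ≥ 0, Δd − 42λ + 18g + ν − 12a + 326 ≥ 0, λ² − 199λ + 62g − ν − Δ − 48a + 1674 ≥ 0, and −λΔd − νΔd + 43λ² − 22λg + 4g² + 43λν − 22gν + 12λa + 12νa − 323λ − 8g − 323ν + 4 ≥ 0 all hold, are exactly the two tuples (14, 15, 0, 1, 5, 0) and (18, 28, 0, 3, 3, 1). -/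

import Mathlib

/-- The admissibility predicate from Lemma 2.2 of the paper. -/
def Admissible (l g D d a : ℤ) : Prop :=
  3 ≤ l ∧ l ≤ 27 ∧ 0 ≤ g ∧
  2 * g ≤ ((l - 2) / 3) * (2 * l - 8 - 3 * ((l - 2) / 3 - 1)) ∧
  1 ≤ d ∧ d ≤ 5 ∧ 1 ≤ D ∧ 0 ≤ a ∧
  (d = 5 ↔ D = 1) ∧ (d = 4 ↔ D = 2) ∧
  (D = 1 → a = 0) ∧ (D = 2 → a = 1) ∧ (3 ≤ D → 1 ≤ a) ∧
  0 ≤ 2 * l - g + 1 ∧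
  0 ≤ -21 * l + 6 * g - D * d + 237 ∧
  0 ≤ l ^ 2 + 9 * l - 18 * g + 18 ∧
  0 ≤ 49 * l ^ 2 - 28 * l * g + 4 * g ^ 2 + (D * d - 1106) * l + 316 * g - 27 * (D * d) + 6241 ∧
  0 ≤ 7 * D * l - 2 * D * g + D ^ 2 * d ^ 2 - 79 * D ∧
  0 ≤ l ^ 2 + 7 * l - 10 * g - 2 * (D * d) + 12 * a - 12 * (if d = 1 then (1 : ℤ) else 0) - 92 ∧
  0 ≤ -10 * l + 8 * g + 2 * (D * d) - 12 * a + 12 * (if d = 1 then (1 : ℤ) else 0) + 94 ∧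
  0 ≤ -290 * l + 140 * g - 13 * (D * d) + D + 2290 ∧
  0 ≤ -147 * l + 74 * g + 12 * (D * d) - D - 84 * a + 108 * (if d = 1 then (1 : ℤ) else 0) + 1183

/-- `CIFactor D s a` : there exist integers `e₁, …, e_a`, all `≥ 2`, with product `D` and sum `s`. -/
def CIFactor (D s a : ℤ) : Prop :=
  ∃ e : List ℤ, (e.length : ℤ) = a ∧ (∀ x ∈ e, 2 ≤ x) ∧ e.prod = D ∧ e.sum = s

/-- The set Γ₁₇₄ from the proof of Theorem 2.3 of the paper. -/
def Gamma174 (l g D d a : ℤ) : Prop :=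
  Admissible l g D d a ∧ d ≠ 1 ∧ CIFactor D (a + 5 - d) a

/-- `K_B · H_B²` for the base locus, from Lemma 2.1. -/
def KH2 (l g : ℤ) : ℤ := -2 * l + 2 * g - 2

/-- `K_B² · H_B` for the base locus, from Lemma 2.1. -/
def K2H (l g D d a : ℤ) : ℤ := -39 * l + 14 * g + D * d - 12 * a + 331

/-- `K_B³` for the base locus, from Lemma 2.1. -/
def K3 (l g D d a : ℤ) : ℤ := l ^ 2 - 77 * l + 14 * g - 3 * (D * d) - D - 12 * a + 688

/-- The Le Barz quadrisecant bound on the number ν of exceptional divisors. -/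
def LeBarz (l g ν D d a : ℤ) : Prop :=
  8 * ν ≤ l ^ 4 - 4 * l ^ 2 * (D * d) + 4 * D ^ 2 * d ^ 2 + 6 * l ^ 3 - 24 * l ^ 2 * g
    + 4 * l * (D * d) + 40 * g * (D * d) + 24 * l ^ 2 * a - 48 * (D * d) * a
    - 433 * l ^ 2 + 160 * l * g + 104 * g ^ 2 + 100 * (D * d) - 56 * l * a
    - 240 * g * a + 144 * a ^ 2 + 5650 * l - 784 * g - 168 * a - 23752

/-!
The factors `e₁, …, e_a ≥ 2` sum to `a + 5 - d`, so `2a ≤ a + 5 - d` and a list of at most three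
factors remains: only seven triples `(Δ, d, a)` survive. For each of them `λ ∈ [3, 27]`, and `g`
lies between `(λ + 3)/2` (from `0 ≤ ν` and the first pluridegree inequality) and
`(λ² + 9λ + 18)/18`; once `λ` and `g` are fixed, every remaining condition is linear in `ν`,
so a finite check over the pairs `(λ, g)` leaves the two listed tuples.
-/

def ciTriples : List (ℤ × ℤ × ℤ) :=
  [(1, 5, 0), (2, 4, 1), (3, 3, 1), (4, 2, 1), (4, 3, 2), (6, 2, 2), (8, 2, 3)]

theorem CIFactor.mem_ciTriples {D d a : ℤ} (hd : 2 ≤ d) (h : CIFactor D (a + 5 - d) a) :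
    (D, d, a) ∈ ciTriples := by
  obtain ⟨e, hlen, he, hprod, hsum⟩ := h
  have hsum_ge : 2 * a ≤ a + 5 - d := by
    have := List.card_nsmul_le_sum e 2 he
    rw [nsmul_eq_mul] at this
    omega
  simp only [ciTriples, List.mem_cons, List.not_mem_nil, or_false, Prod.mk.injEq]
  rcases e with _ | ⟨x, _ | ⟨y, _ | ⟨z, _ | ⟨w, e⟩⟩⟩⟩ <;>
    simp only [List.length_cons, List.length_nil, List.prod_cons, List.prod_nil,
      List.sum_cons, List.sum_nil, List.forall_mem_cons, List.not_mem_nil, IsEmpty.forall_iff,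
      implies_true, and_true] at hlen hprod hsum he
  · omega
  · omega
  · obtain ⟨hx, hy⟩ := he
    have hx' : x ≤ 3 := by omega
    interval_cases x <;> omega
  · obtain ⟨rfl, rfl, rfl⟩ : x = 2 ∧ y = 2 ∧ z = 2 := by omega
    omega
  · omega

theorem eq_of_pluridegree_bounds {l g ν D d a : ℤ}
    (hDda : (D, d, a) ∈ ciTriples)
    (hl₀ : 3 ≤ l) (hl₁ : l ≤ 27)
    (hg_ge : 0 ≤ -21 * l + 6 * g - D * d + 237)
    (hg_le : 0 ≤ l ^ 2 + 9 * l - 18 * g + 18)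
    (hquad : 0 ≤ 49 * l ^ 2 - 28 * l * g + 4 * g ^ 2 + (D * d - 1106) * l + 316 * g
      - 27 * (D * d) + 6241)
    (hν : 0 ≤ ν) (hLB : LeBarz l g ν D d a)
    (h₁ : 0 ≤ -l + 2 * g - ν - 3)
    (h₂ : 0 ≤ D * d - 42 * l + 18 * g + ν - 12 * a + 326)
    (h₃ : 0 ≤ l ^ 2 - 199 * l + 62 * g - ν - D - 48 * a + 1674)
    (h₄ : 0 ≤ -l * (D * d) - ν * (D * d) + 43 * l ^ 2 - 22 * l * g + 4 * g ^ 2 + 43 * l * ν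
      - 22 * g * ν + 12 * l * a + 12 * ν * a - 323 * l - 8 * g - 323 * ν + 4) :
    (l, g, ν, D, d, a) = (14, 15, 0, 1, 5, 0) ∨ (l, g, ν, D, d, a) = (18, 28, 0, 3, 3, 1) := by
  unfold LeBarz at hLB
  simp only [ciTriples, List.mem_cons, List.not_mem_nil, or_false, Prod.mk.injEq] at hDda
  simp only [Prod.mk.injEq]
  have hg₀ : (l + 3) / 2 ≤ g := by omega
  have hg₁ : g ≤ (l ^ 2 + 9 * l + 18) / 18 := by omega
  have hg₂ : (21 * l + D * d - 232) / 6 ≤ g := by omega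
  rcases hDda with ⟨rfl, rfl, rfl⟩ | ⟨rfl, rfl, rfl⟩ | ⟨rfl, rfl, rfl⟩ | ⟨rfl, rfl, rfl⟩ |
    ⟨rfl, rfl, rfl⟩ | ⟨rfl, rfl, rfl⟩ | ⟨rfl, rfl, rfl⟩ <;>
  · interval_cases l <;> interval_cases g <;> omega

/-- In the proof of Theorem 2.3, the case where `K_R + H_R` is nef and big: the four
pluridegree inequalities select exactly `(14, 15, 0, 1, 5, 0)` and `(18, 28, 0, 3, 3, 1)`. -/
theorem nef_big_case_solutions (l g ν D d a : ℤ) :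
    (Gamma174 l g D d a ∧ 0 ≤ ν ∧ LeBarz l g ν D d a ∧
      0 ≤ -l + 2 * g - ν - 3 ∧
      0 ≤ D * d - 42 * l + 18 * g + ν - 12 * a + 326 ∧
      0 ≤ l ^ 2 - 199 * l + 62 * g - ν - D - 48 * a + 1674 ∧
      0 ≤ -l * (D * d) - ν * (D * d) + 43 * l ^ 2 - 22 * l * g + 4 * g ^ 2 + 43 * l * ν
          - 22 * g * ν + 12 * l * a + 12 * ν * a - 323 * l - 8 * g - 323 * ν + 4)
    ↔ ((l, g, ν, D, d, a) = (14, 15, 0, 1, 5, 0) ∨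
        (l, g, ν, D, d, a) = (18, 28, 0, 3, 3, 1)) := by
  constructor
  · rintro ⟨⟨hadm, hd, hfac⟩, hν, hLB, h₁, h₂, h₃, h₄⟩
    obtain ⟨hl₀, hl₁, -, -, hd_pos, -, -, -, -, -, -, -, -, -, hg_ge, hg_le, hquad, -⟩ := hadm
    exact eq_of_pluridegree_bounds (hfac.mem_ciTriples (by omega)) hl₀ hl₁ hg_ge hg_le hquad
      hν hLB h₁ h₂ h₃ h₄
  · rintro (h | h) <;> simp only [Prod.mk.injEq] at h <;>
      obtain ⟨rfl, rfl, rfl, rfl, rfl, rfl⟩ := h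
    · exact ⟨⟨by norm_num [Admissible], by norm_num, [], by norm_num⟩, by norm_num,
        by norm_num [LeBarz], by norm_num⟩
    · exact ⟨⟨by norm_num [Admissible], by norm_num, [3], by norm_num⟩, by norm_num,
        by norm_num [LeBarz], by norm_num⟩
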